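/- Let f : ℝⁿ → ℝⁿ satisfy: for all x, y, z ∈ ℝⁿ and t > 0, if |y - x| = t·|z - x| then |f(y) - f(x)| = t·|f(z) - f(x)|, and assume f is not constant. Then there exists a > 0 such that |f(u) - f(v)| = a·|u - v| for all u, v ∈ ℝⁿ; in particular f is a similarity. -/
import Mathlib


theorem stmt19 (n : ℕ) (hn : 1 ≤ n)
    (f : EuclideanSpace ℝ (Fin n) → EuclideanSpace ℝ (Fin n))
    (hscale : ∀ x y z : EuclideanSpace ℝ (Fin n), ∀ t : ℝ, 0 < t →
      ‖y - x‖ = t * ‖z - x‖ → ‖f y - f x‖ = t * ‖f z - f x‖)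
    (hnonconst : ∃ u v : EuclideanSpace ℝ (Fin n), f u ≠ f v) :
    ∃ a : ℝ, 0 < a ∧ ∀ u v : EuclideanSpace ℝ (Fin n),
      ‖f u - f v‖ = a * ‖u - v‖ := by
  have key : ∀ x y z : EuclideanSpace ℝ (Fin n), y ≠ x → z ≠ x →
      ‖f y - f x‖ * ‖z - x‖ = ‖f z - f x‖ * ‖y - x‖ := by
    intro x y z hy hz
    have hzx : (0:ℝ) < ‖z - x‖ := norm_pos_iff.2 (sub_ne_zero.2 hz)
    have hyx : (0:ℝ) < ‖y - x‖ := norm_pos_iff.2 (sub_ne_zero.2 hy)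
    have ht : 0 < ‖y - x‖ / ‖z - x‖ := div_pos hyx hzx
    have h1 : ‖y - x‖ = (‖y - x‖ / ‖z - x‖) * ‖z - x‖ :=
      (div_mul_cancel₀ _ hzx.ne').symm
    have h2 := hscale x y z _ ht h1
    rw [h2]; field_simp
  -- injectivity
  have hinj : ∀ x y : EuclideanSpace ℝ (Fin n), y ≠ x → f y ≠ f x := by
    intro x y hxy hfe
    obtain ⟨u, v, huv⟩ := hnonconst
    have hconst : ∀ z, f z = f x := by
      intro z
      by_cases hz : z = x
      · rw [hz]
      · have h := key x y z hxy hz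
        rw [hfe, sub_self, norm_zero, zero_mul] at h
        have hyx : (0:ℝ) < ‖y - x‖ := norm_pos_iff.2 (sub_ne_zero.2 hxy)
        have : ‖f z - f x‖ = 0 := by
          rcases mul_eq_zero.1 h.symm with h' | h'
          · exact h'
          · exact absurd h' hyx.ne'
        exact sub_eq_zero.1 (norm_eq_zero.1 this)
    exact huv ((hconst u).trans (hconst v).symm)
  set i : Fin n := ⟨0, hn⟩
  set q : EuclideanSpace ℝ (Fin n) := EuclideanSpace.single i (1:ℝ) with hqdef
  have hq : q ≠ 0 := by
    intro h
    have : ‖q‖ = 1 := by rw [hqdef, EuclideanSpace.norm_single]; norm_num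
    rw [h, norm_zero] at this; norm_num at this
  have hqn : (0:ℝ) < ‖q - 0‖ := norm_pos_iff.2 (sub_ne_zero.2 hq)
  have hfq : f q ≠ f 0 := hinj 0 q hq
  have hfqn : (0:ℝ) < ‖f q - f 0‖ := norm_pos_iff.2 (sub_ne_zero.2 hfq)
  refine ⟨‖f q - f 0‖ / ‖q - 0‖, div_pos hfqn hqn, ?_⟩
  set a : ℝ := ‖f q - f 0‖ / ‖q - 0‖ with ha
  have base : ∀ u : EuclideanSpace ℝ (Fin n), ‖f u - f 0‖ = a * ‖u - 0‖ := by
    intro u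
    by_cases hu : u = 0
    · simp [hu]
    · have h := key 0 u q hu hq
      rw [ha, div_mul_eq_mul_div, eq_div_iff hqn.ne']
      linarith [h]
  intro u v
  by_cases huv : u = v
  · simp [huv]
  · by_cases hv : v = 0
    · rw [hv]; exact base u
    · have h := key v u 0 huv (Ne.symm hv)
      have h0v : ‖f 0 - f v‖ = a * ‖0 - v‖ := by
        rw [norm_sub_rev, norm_sub_rev (0:EuclideanSpace ℝ (Fin n))]
        exact base v
      have hvn : (0:ℝ) < ‖(0:EuclideanSpace ℝ (Fin n)) - v‖ :=
        norm_pos_iff.2 (sub_ne_zero.2 (Ne.symm hv))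
      rw [h0v] at h
      have := mul_right_cancel₀ hvn.ne' (by linarith [h] : ‖f u - f v‖ * ‖0 - v‖ = (a * ‖u - v‖) * ‖0 - v‖)
      exact this
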